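/- For a prime p and integers 1 ≤ a ≤ b ≤ c ≤ a+b, the number of subgroups of order p^c of Z_{p^a} × Z_{p^b} equals (p^{a+b−c+1} − 1)/(p − 1). -/
import Mathlib

open AddSubgroup

theorem zmod_subgroup (n : ℕ) (hn : n ≠ 0) (H : AddSubgroup (ZMod n)) :
    ∃ k : ℕ, k ∣ n ∧ H = zmultiples ((k : ZMod n)) := by
  obtain ⟨a, ha⟩ := Int.subgroup_cyclic (H.comap (Int.castAddHom (ZMod n)))
  have hsurj : Function.Surjective (Int.castAddHom (ZMod n)) := ZMod.intCast_surjective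
  have hmap := AddSubgroup.map_comap_eq_self_of_surjective hsurj H
  rw [ha] at hmap
  refine ⟨a.natAbs, ?_, ?_⟩
  · have hn' : (n : ℤ) ∈ AddSubgroup.closure {a} := by
      rw [← ha]
      simp only [AddSubgroup.mem_comap, Int.coe_castAddHom, Int.cast_natCast, ZMod.natCast_self]
      exact H.zero_mem
    rw [← AddSubgroup.zmultiples_eq_closure, mem_zmultiples_iff] at hn'
    obtain ⟨k, hk⟩ := hn'
    have : a ∣ (n : ℤ) := Dvd.intro_left k (by rw [← hk]; simp [zsmul_eq_mul])
    simpa using Int.natAbs_dvd_natAbs.mpr this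
  · rw [← hmap, ← AddSubgroup.zmultiples_eq_closure]
    have h1 : AddSubgroup.map (Int.castAddHom (ZMod n)) (zmultiples a) = zmultiples ((a : ZMod n)) := by
      apply le_antisymm
      · rintro x ⟨y, hy, rfl⟩
        rw [SetLike.mem_coe, mem_zmultiples_iff] at hy
        obtain ⟨k, rfl⟩ := hy
        rw [mem_zmultiples_iff]
        exact ⟨k, by simp only [Int.coe_castAddHom, zsmul_eq_mul]; push_cast; ring⟩
      · rintro x hx
        rw [mem_zmultiples_iff] at hx
        obtain ⟨k, rfl⟩ := hx
        exact ⟨k • a, mem_zmultiples_iff.mpr ⟨k, rfl⟩,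
          by simp only [Int.coe_castAddHom, zsmul_eq_mul]; push_cast; ring⟩
    rw [h1]
    rcases Int.natAbs_eq a with h | h
    · conv_lhs => rw [h]
      rw [Int.cast_natCast]
    · conv_lhs => rw [h]
      rw [Int.cast_neg, Int.cast_natCast, zmultiples_neg]

theorem zmod_mem_zmultiples_iff {n k : ℕ} (hn : n ≠ 0) (hk : k ∣ n) (y : ZMod n) :
    y ∈ zmultiples ((k : ZMod n)) ↔ k ∣ y.val := by
  haveI : NeZero n := ⟨hn⟩
  constructor
  · rintro ⟨m, rfl⟩
    set v : ℕ := (m • (k : ZMod n)).val with hv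
    have h1 : ((v : ℤ) : ZMod n) = ((m * k : ℤ) : ZMod n) := by
      push_cast
      rw [hv, ZMod.natCast_val, ZMod.cast_id]
      push_cast [zsmul_eq_mul]
      ring
    rw [ZMod.intCast_eq_intCast_iff] at h1
    have h2 : (n : ℤ) ∣ (v : ℤ) - m * k := Int.ModEq.dvd h1.symm
    have h3 : (k : ℤ) ∣ (v : ℤ) := by
      have h5 := dvd_trans (Int.natCast_dvd_natCast.mpr hk) h2
      have h4 : (k : ℤ) ∣ m * k := ⟨m, by ring⟩
      have := dvd_add h5 h4
      simpa using this
    exact_mod_cast h3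
  · intro h
    obtain ⟨m, hm⟩ := h
    have : y = ((k * m : ℕ) : ZMod n) := by rw [← hm, ZMod.natCast_val, ZMod.cast_id]
    rw [this]
    exact ⟨m, by push_cast [zsmul_eq_mul]; ring⟩

theorem zmod_card_zmultiples {n k : ℕ} (hn : n ≠ 0) (hk : k ∣ n) :
    Nat.card (zmultiples ((k : ZMod n))) = n / k := by
  rw [Nat.card_zmultiples, ZMod.addOrderOf_coe _ hn, Nat.gcd_comm, Nat.gcd_eq_left hk]

theorem card_decomp {A B : Type*} [AddCommGroup A] [AddCommGroup B] [Finite A] [Finite B]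
    (H : AddSubgroup (A × B)) :
    Nat.card H = Nat.card (H.map (AddMonoidHom.fst A B))
      * Nat.card (H ⊓ (⊥ : AddSubgroup A).prod (⊤ : AddSubgroup B) : AddSubgroup (A × B)) := by
  set φ := (AddMonoidHom.fst A B).comp H.subtype with hφ
  have h1 : Nat.card H = Nat.card (H ⧸ φ.ker) * Nat.card φ.ker :=
    AddSubgroup.card_eq_card_quotient_mul_card_addSubgroup φ.ker
  have h2 : Nat.card (H ⧸ φ.ker) = Nat.card (H.map (AddMonoidHom.fst A B)) := by
    rw [Nat.card_congr (QuotientAddGroup.quotientKerEquivRange φ).toEquiv]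
    congr 1
    rw [hφ, AddMonoidHom.range_comp, AddSubgroup.range_subtype]
  have h3 : Nat.card φ.ker
      = Nat.card (H ⊓ (⊥ : AddSubgroup A).prod (⊤ : AddSubgroup B) : AddSubgroup (A × B)) := by
    have hk : φ.ker = ((⊥ : AddSubgroup A).prod (⊤ : AddSubgroup B)).addSubgroupOf H := by
      rw [hφ, ← AddMonoidHom.comap_ker, AddMonoidHom.ker_fst]
      rfl
    rw [hk, ← AddSubgroup.inf_addSubgroupOf_right]
    rw [Nat.card_congr (AddSubgroup.addSubgroupOfEquivOfLe inf_le_right).toEquiv]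
    rw [inf_comm]
  rw [h1, h2, h3]

def Hsub (p a b d j x : ℕ) : AddSubgroup (ZMod (p^a) × ZMod (p^b)) :=
  zmultiples (((p^(d-j) : ℕ) : ZMod (p^a)), ((x : ℕ) : ZMod (p^b)))
    ⊔ (⊥ : AddSubgroup (ZMod (p^a))).prod (zmultiples ((p^j : ℕ) : ZMod (p^b)))

theorem Hsub_inf (p a b d j x : ℕ) (hp : p.Prime) (hj : j ≤ d) (hd : d ≤ a) (hab : a ≤ b) :
    Hsub p a b d j x ⊓ (⊥ : AddSubgroup (ZMod (p^a))).prod (⊤ : AddSubgroup (ZMod (p^b)))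
      = (⊥ : AddSubgroup (ZMod (p^a))).prod (zmultiples ((p^j : ℕ) : ZMod (p^b))) := by
  haveI : NeZero (p^a) := ⟨pow_ne_zero _ hp.ne_zero⟩
  haveI : NeZero (p^b) := ⟨pow_ne_zero _ hp.ne_zero⟩
  apply le_antisymm
  · intro w hw
    rw [AddSubgroup.mem_inf] at hw
    obtain ⟨h1, h2⟩ := hw
    obtain ⟨u, v⟩ := w
    rw [AddSubgroup.mem_prod] at h2
    obtain ⟨hu, -⟩ := h2
    rw [AddSubgroup.mem_bot] at hu
    subst hu
    rw [Hsub, AddSubgroup.mem_sup] at h1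
    obtain ⟨y, hy, z, hz, hyz⟩ := h1
    obtain ⟨t, rfl⟩ := hy
    rw [AddSubgroup.mem_prod] at hz
    obtain ⟨hz1, hz2⟩ := hz
    rw [AddSubgroup.mem_bot] at hz1
    have hfst : t • ((p^(d-j) : ℕ) : ZMod (p^a)) = 0 := by
      have := congrArg Prod.fst hyz
      simpa [hz1] using this
    -- order divides t
    have hord : ((addOrderOf ((p^(d-j) : ℕ) : ZMod (p^a)) : ℤ)) ∣ t :=
      addOrderOf_dvd_iff_zsmul_eq_zero.mpr hfst
    have horder : addOrderOf ((p^(d-j) : ℕ) : ZMod (p^a)) = p^(a-(d-j)) := by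
      rw [ZMod.addOrderOf_coe _ (pow_ne_zero _ hp.ne_zero),
        Nat.gcd_comm, Nat.gcd_eq_left (pow_dvd_pow p (by omega)), Nat.pow_div (by omega) hp.pos]
    rw [horder] at hord
    have hpj : ((p^j : ℕ) : ℤ) ∣ t := dvd_trans (by exact_mod_cast pow_dvd_pow p (by omega)) hord
    obtain ⟨s, rfl⟩ := hpj
    rw [AddSubgroup.mem_prod]
    refine ⟨AddSubgroup.mem_bot.mpr rfl, ?_⟩
    have hsnd : v = ((p^j : ℕ) * s) • ((x : ℕ) : ZMod (p^b)) + z.2 := by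
      have := congrArg Prod.snd hyz
      simpa using this.symm
    rw [hsnd]
    apply add_mem _ hz2
    have : ((p^j : ℕ) * s) • ((x : ℕ) : ZMod (p^b)) = (s * x) • ((p^j : ℕ) : ZMod (p^b)) := by
      simp only [zsmul_eq_mul]
      push_cast
      ring
    rw [this]
    exact zsmul_mem (mem_zmultiples _) _
  · exact le_inf le_sup_right (AddSubgroup.prod_mono le_rfl le_top)

theorem Hsub_map_fst (p a b d j x : ℕ) :
    (Hsub p a b d j x).map (AddMonoidHom.fst _ _) = zmultiples ((p^(d-j) : ℕ) : ZMod (p^a)) := by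
  rw [Hsub, AddSubgroup.map_sup]
  have h1 : (zmultiples (((p^(d-j) : ℕ) : ZMod (p^a)), ((x : ℕ) : ZMod (p^b)))).map
      (AddMonoidHom.fst _ _) = zmultiples ((p^(d-j) : ℕ) : ZMod (p^a)) :=
    AddMonoidHom.map_zmultiples _ _
  have h2 : ((⊥ : AddSubgroup (ZMod (p^a))).prod (zmultiples ((p^j : ℕ) : ZMod (p^b)))).map
      (AddMonoidHom.fst _ _) = ⊥ := by
    rw [eq_bot_iff]
    rintro u ⟨⟨u', v'⟩, hm, rfl⟩
    rw [SetLike.mem_coe, AddSubgroup.mem_prod, AddSubgroup.mem_bot] at hm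
    simpa using hm.1
  rw [h1, h2, sup_bot_eq]

theorem card_prod_bot {A B : Type*} [AddCommGroup A] [AddCommGroup B]
    (M : AddSubgroup B) :
    Nat.card ((⊥ : AddSubgroup A).prod M : AddSubgroup (A × B)) = Nat.card M := by
  rw [Nat.card_congr (AddSubgroup.prodEquiv _ _).toEquiv, Nat.card_prod,
    AddSubgroup.card_bot, one_mul]

theorem Hsub_card (p a b d j x : ℕ) (hp : p.Prime) (hj : j ≤ d) (hd : d ≤ a) (hab : a ≤ b) :
    Nat.card (Hsub p a b d j x) = p ^ (a + b - d) := by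
  haveI : NeZero (p^a) := ⟨pow_ne_zero _ hp.ne_zero⟩
  haveI : NeZero (p^b) := ⟨pow_ne_zero _ hp.ne_zero⟩
  rw [card_decomp, Hsub_map_fst, Hsub_inf p a b d j x hp hj hd hab, card_prod_bot]
  rw [zmod_card_zmultiples (pow_ne_zero _ hp.ne_zero) (pow_dvd_pow p (by omega)),
    zmod_card_zmultiples (pow_ne_zero _ hp.ne_zero) (pow_dvd_pow p (show j ≤ b by omega)),
    Nat.pow_div (by omega) hp.pos, Nat.pow_div (show j ≤ b by omega) hp.pos, ← pow_add]
  congr 1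
  omega

theorem Hsub_inj (p a b d j j' x x' : ℕ) (hp : p.Prime) (hj : j ≤ d) (hj' : j' ≤ d)
    (hd : d ≤ a) (hab : a ≤ b) (hx : x < p^j) (hx' : x' < p^j')
    (heq : Hsub p a b d j x = Hsub p a b d j' x') : j = j' ∧ x = x' := by
  haveI : NeZero (p^a) := ⟨pow_ne_zero _ hp.ne_zero⟩
  haveI : NeZero (p^b) := ⟨pow_ne_zero _ hp.ne_zero⟩
  have hbne : (p^b) ≠ 0 := pow_ne_zero _ hp.ne_zero
  have hjj : j = j' := by
    have h1 := Hsub_inf p a b d j x hp hj hd hab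
    have h2 := Hsub_inf p a b d j' x' hp hj' hd hab
    rw [heq, h2] at h1
    have := congrArg (fun S : AddSubgroup (ZMod (p^a) × ZMod (p^b)) => Nat.card S) h1
    simp only [card_prod_bot] at this
    rw [zmod_card_zmultiples hbne (pow_dvd_pow p (by omega)),
      zmod_card_zmultiples hbne (pow_dvd_pow p (by omega)),
      Nat.pow_div (by omega) hp.pos, Nat.pow_div (by omega) hp.pos] at this
    have := Nat.pow_right_injective hp.two_le this
    omega
  subst hjj
  refine ⟨rfl, ?_⟩
  -- the generator of Hsub j x lies in Hsub j x'
  have hg : (((p^(d-j) : ℕ) : ZMod (p^a)), ((x : ℕ) : ZMod (p^b))) ∈ Hsub p a b d j x' := by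
    rw [← heq, Hsub]
    exact AddSubgroup.mem_sup_left (mem_zmultiples _)
  rw [Hsub, AddSubgroup.mem_sup] at hg
  obtain ⟨y, hy, z, hz, hyz⟩ := hg
  obtain ⟨t, rfl⟩ := hy
  rw [AddSubgroup.mem_prod, AddSubgroup.mem_bot] at hz
  obtain ⟨hz1, hz2⟩ := hz
  have hfst : (t - 1) • ((p^(d-j) : ℕ) : ZMod (p^a)) = 0 := by
    have := congrArg Prod.fst hyz
    simp only [Prod.fst_add, Prod.smul_fst, hz1, add_zero] at this
    rw [sub_smul, one_smul, this, sub_self]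
  have hord : ((addOrderOf ((p^(d-j) : ℕ) : ZMod (p^a)) : ℤ)) ∣ (t - 1) :=
    addOrderOf_dvd_iff_zsmul_eq_zero.mpr hfst
  have horder : addOrderOf ((p^(d-j) : ℕ) : ZMod (p^a)) = p^(a-(d-j)) := by
    rw [ZMod.addOrderOf_coe _ (pow_ne_zero _ hp.ne_zero),
      Nat.gcd_comm, Nat.gcd_eq_left (pow_dvd_pow p (by omega)), Nat.pow_div (by omega) hp.pos]
  rw [horder] at hord
  have hpj : ((p^j : ℕ) : ℤ) ∣ (t - 1) := dvd_trans (by exact_mod_cast pow_dvd_pow p (by omega)) hord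
  obtain ⟨s, hs⟩ := hpj
  -- second coordinates
  have hsnd : ((x : ℕ) : ZMod (p^b)) - ((x' : ℕ) : ZMod (p^b)) ∈ zmultiples ((p^j : ℕ) : ZMod (p^b)) := by
    have h5 := congrArg Prod.snd hyz
    simp only [Prod.snd_add, Prod.smul_snd] at h5
    have : ((x : ℕ) : ZMod (p^b)) - ((x' : ℕ) : ZMod (p^b)) = (t - 1) • ((x' : ℕ) : ZMod (p^b)) + z.2 := by
      rw [sub_smul, one_smul]
      rw [← h5]
      ring
    rw [this]
    apply add_mem _ hz2
    have : (t - 1) • ((x' : ℕ) : ZMod (p^b)) = (s * x') • ((p^j : ℕ) : ZMod (p^b)) := by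
      simp only [zsmul_eq_mul]
      rw [show ((t - 1 : ℤ) : ZMod (p^b)) = (((p^j : ℕ) * s : ℤ) : ZMod (p^b)) by rw [← hs]]
      push_cast
      ring
    rw [this]
    exact zsmul_mem (mem_zmultiples _) _
  -- conclude x = x'
  rcases le_total x x' with hle | hle
  · have : ((x' - x : ℕ) : ZMod (p^b)) ∈ zmultiples ((p^j : ℕ) : ZMod (p^b)) := by
      have : ((x' - x : ℕ) : ZMod (p^b)) = -(((x : ℕ) : ZMod (p^b)) - ((x' : ℕ) : ZMod (p^b))) := by
        push_cast [hle]
        ring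
      rw [this]
      exact neg_mem hsnd
    rw [zmod_mem_zmultiples_iff hbne (pow_dvd_pow p (by omega))] at this
    have hpow : p^j ≤ p^b := Nat.pow_le_pow_right hp.pos (by omega)
    rw [ZMod.val_cast_of_lt (by omega)] at this
    have h9 : x' - x = 0 ∨ p^j ≤ x' - x := by
      rcases Nat.eq_zero_or_pos (x'-x) with h|h
      · exact Or.inl h
      · exact Or.inr (Nat.le_of_dvd h this)
    omega
  · have : ((x - x' : ℕ) : ZMod (p^b)) ∈ zmultiples ((p^j : ℕ) : ZMod (p^b)) := by
      have : ((x - x' : ℕ) : ZMod (p^b)) = (((x : ℕ) : ZMod (p^b)) - ((x' : ℕ) : ZMod (p^b))) := by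
        push_cast [hle]
        ring
      rw [this]
      exact hsnd
    rw [zmod_mem_zmultiples_iff hbne (pow_dvd_pow p (by omega))] at this
    have hpow : p^j ≤ p^b := Nat.pow_le_pow_right hp.pos (by omega)
    rw [ZMod.val_cast_of_lt (by omega)] at this
    have h9 : x - x' = 0 ∨ p^j ≤ x - x' := by
      rcases Nat.eq_zero_or_pos (x-x') with h|h
      · exact Or.inl h
      · exact Or.inr (Nat.le_of_dvd h this)
    omega

theorem Hsub_surj (p a b d : ℕ) (hp : p.Prime) (hd : d ≤ a) (hab : a ≤ b)
    (H : AddSubgroup (ZMod (p^a) × ZMod (p^b))) (hcard : Nat.card H = p ^ (a + b - d)) :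
    ∃ j x, j ≤ d ∧ x < p^j ∧ H = Hsub p a b d j x := by
  haveI : NeZero (p^a) := ⟨pow_ne_zero _ hp.ne_zero⟩
  haveI : NeZero (p^b) := ⟨pow_ne_zero _ hp.ne_zero⟩
  have hane : (p^a) ≠ 0 := pow_ne_zero _ hp.ne_zero
  have hbne : (p^b) ≠ 0 := pow_ne_zero _ hp.ne_zero
  set K : AddSubgroup (ZMod (p^a) × ZMod (p^b)) :=
    H ⊓ (⊥ : AddSubgroup (ZMod (p^a))).prod (⊤ : AddSubgroup (ZMod (p^b))) with hK
  set M : AddSubgroup (ZMod (p^b)) := K.map (AddMonoidHom.snd _ _) with hM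
  have hKM : K = (⊥ : AddSubgroup (ZMod (p^a))).prod M := by
    ext ⟨u, v⟩
    rw [AddSubgroup.mem_prod, AddSubgroup.mem_bot]
    constructor
    · intro h
      have h2 := h
      rw [hK, AddSubgroup.mem_inf, AddSubgroup.mem_prod, AddSubgroup.mem_bot] at h2
      exact ⟨h2.2.1, ⟨(u, v), h, rfl⟩⟩
    · rintro ⟨rfl, hv⟩
      obtain ⟨⟨u', v'⟩, hm, rfl⟩ := hv
      rw [SetLike.mem_coe] at hm
      have h2 := hm
      rw [hK, AddSubgroup.mem_inf, AddSubgroup.mem_prod, AddSubgroup.mem_bot] at h2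
      rw [show ((0 : ZMod (p^a)), (AddMonoidHom.snd _ _) (u', v')) = (u', v') from
        Prod.ext_iff.mpr ⟨h2.2.1.symm, rfl⟩]
      exact hm
  obtain ⟨k₁, hk₁, hP⟩ := zmod_subgroup _ hane (H.map (AddMonoidHom.fst _ _))
  obtain ⟨k₂, hk₂, hMz⟩ := zmod_subgroup _ hbne M
  obtain ⟨i, hi, rfl⟩ := (Nat.dvd_prime_pow hp).mp hk₁
  obtain ⟨j, hjb, rfl⟩ := (Nat.dvd_prime_pow hp).mp hk₂
  -- cardinality bookkeeping
  have hcards : p^(a-i) * p^(b-j) = p^(a+b-d) := by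
    rw [← hcard, card_decomp H, hP, ← hK, hKM, card_prod_bot, hMz,
      zmod_card_zmultiples hane hk₁, zmod_card_zmultiples hbne hk₂,
      Nat.pow_div hi hp.pos, Nat.pow_div hjb hp.pos]
  rw [← pow_add] at hcards
  have hsum : (a-i) + (b-j) = a+b-d := Nat.pow_right_injective hp.two_le hcards
  have hij : i + j = d := by omega
  -- find h ∈ H with fst = p^i
  have hmem : ((p^i : ℕ) : ZMod (p^a)) ∈ H.map (AddMonoidHom.fst _ _) := by
    rw [hP]; exact mem_zmultiples _
  obtain ⟨⟨u, v⟩, hH, hu⟩ := hmem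
  rw [SetLike.mem_coe] at hH
  simp only [AddMonoidHom.coe_fst] at hu
  subst hu
  set x : ℕ := v.val % p^j with hxdef
  refine ⟨j, x, by omega, Nat.mod_lt _ (pow_pos hp.pos j), ?_⟩
  have hdj : d - j = i := by omega
  have hKle : (⊥ : AddSubgroup (ZMod (p^a))).prod (zmultiples ((p^j : ℕ) : ZMod (p^b))) ≤ H := by
    rw [← hMz, ← hKM, hK]
    exact inf_le_left
  have hgmem : (((p^(d-j) : ℕ) : ZMod (p^a)), ((x : ℕ) : ZMod (p^b))) ∈ H := by
    have hvx : v - ((x : ℕ) : ZMod (p^b)) ∈ zmultiples ((p^j : ℕ) : ZMod (p^b)) := by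
      have hxle : x ≤ v.val := Nat.mod_le _ _
      have hdvd : p^j ∣ v.val - x := by
        refine ⟨v.val / p^j, ?_⟩
        have := Nat.div_add_mod v.val (p^j)
        omega
      obtain ⟨m, hm⟩ := hdvd
      have : v - ((x : ℕ) : ZMod (p^b)) = ((p^j * m : ℕ) : ZMod (p^b)) := by
        rw [← hm]
        push_cast [hxle, ZMod.natCast_val, ZMod.cast_id]
        try ring
      rw [this]
      exact ⟨m, by push_cast [zsmul_eq_mul]; ring⟩
    have h0 : ((0 : ZMod (p^a)), v - ((x : ℕ) : ZMod (p^b))) ∈ H :=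
      hKle (by rw [AddSubgroup.mem_prod]; exact ⟨AddSubgroup.mem_bot.mpr rfl, hvx⟩)
    have := H.sub_mem hH h0
    simpa [hdj] using this
  have hle : Hsub p a b d j x ≤ H := by
    rw [Hsub]
    exact sup_le (zmultiples_le.mpr hgmem) hKle
  have hfin : Finite H := Subtype.finite
  have := AddSubgroup.eq_of_le_of_card_ge hle (by
    rw [hcard, Hsub_card p a b d j x hp (by omega) hd hab])
  exact this.symm

/-- For `1 ≤ a ≤ b ≤ c ≤ a + b`, the number of subgroups of order `p^c` of
`Z_{p^a} × Z_{p^b}` equals `(p^{a+b-c+1} - 1)/(p - 1)`, stated in division-free form. -/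
theorem number_of_subgroups_order_pc_case3 (p a b c : ℕ) (hp : p.Prime) (ha : 1 ≤ a)
    (hab : a ≤ b) (hbc : b ≤ c) (hc : c ≤ a + b) :
    Nat.card {H : AddSubgroup (ZMod (p ^ a) × ZMod (p ^ b)) // Nat.card H = p ^ c}
      * (p - 1) = p ^ (a + b - c + 1) - 1 := by
  set d : ℕ := a + b - c with hd
  have hda : d ≤ a := by omega
  have habd : a + b - d = c := by omega
  -- the bijection
  have hcardHsub : ∀ (j : Fin (d+1)) (x : Fin (p ^ (j : ℕ))),
      Nat.card (Hsub p a b d j x) = p ^ c := by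
    intro j x
    rw [Hsub_card p a b d j x hp (by omega) hda hab, habd]
  let f : (Σ j : Fin (d+1), Fin (p ^ (j : ℕ))) →
      {H : AddSubgroup (ZMod (p ^ a) × ZMod (p ^ b)) // Nat.card H = p ^ c} :=
    fun jx => ⟨Hsub p a b d jx.1 jx.2, hcardHsub jx.1 jx.2⟩
  have hbij : Function.Bijective f := by
    constructor
    · rintro ⟨j, x⟩ ⟨j', x'⟩ h
      have heq : Hsub p a b d j x = Hsub p a b d j' x' := congrArg Subtype.val h
      obtain ⟨h1, h2⟩ := Hsub_inj p a b d j j' x x' hp (by omega) (by omega) hda hab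
        x.isLt x'.isLt heq
      have hj : j = j' := Fin.ext h1
      subst hj
      congr
      exact Fin.ext h2
    · rintro ⟨H, hH⟩
      obtain ⟨j, x, hj, hx, rfl⟩ := Hsub_surj p a b d hp hda hab H (by rw [hH, habd])
      exact ⟨⟨⟨j, by omega⟩, ⟨x, hx⟩⟩, rfl⟩
  have hcount : Nat.card {H : AddSubgroup (ZMod (p ^ a) × ZMod (p ^ b)) // Nat.card H = p ^ c}
      = ∑ j ∈ Finset.range (d+1), p ^ j := by
    rw [← Nat.card_congr (Equiv.ofBijective f hbij)]
    rw [Nat.card_eq_fintype_card, Fintype.card_sigma]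
    simp only [Fintype.card_fin]
    exact Fin.sum_univ_eq_sum_range _ _
  rw [hcount]
  have key : ∀ n : ℕ, (∑ j ∈ Finset.range n, p^j) * (p-1) = p^n - 1 := by
    intro n
    induction n with
    | zero => simp
    | succ n ih =>
      rw [Finset.sum_range_succ, add_mul, ih]
      have h1 : 1 ≤ p^n := Nat.one_le_pow _ _ hp.pos
      have h2 : p^n ≤ p^(n+1) := Nat.pow_le_pow_right hp.pos (by omega)
      have h3 : p^n * (p-1) = p^(n+1) - p^n := by
        zify [hp.one_lt.le, h2]
        ring
      omega
  rw [key]
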